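/- For the Gaussian weight ω^{[u,Θ]}(ξ) = ρ det(2πΘ)^{-1/2} exp(-(ξ-u)ᵀΘ⁻¹(ξ-u)/2) with Θ symmetric positive definite, the generalized Hermite functions H_α^Θ = (-1)^{|α|} ∂^α ω^{[u,Θ]}/∂ξ^α satisfy ξ_d H_α^Θ = Σ_j θ_{jd} H_{α+e_j}^Θ + u_d H_α^Θ + α_d H_{α-e_d}^Θ. -/

import Mathlib

/-!
The Gaussian solves the first-order system `Θ ∇ω = (u - ξ) ω`, because `∇ω = -Θ⁻¹ (ξ - u) ω` for
symmetric `Θ`. This is the case `γ = 0` of the identity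
`ξ_d ∂^γ ω + γ_d ∂^(γ - e_d) ω = u_d ∂^γ ω - ∑_j θ_dj ∂^(γ + e_j) ω`, and differentiating the
identity for `γ` in `ξ_k` (Leibniz rule on `ξ_d ∂^γ ω`) gives the one for `γ + e_k`. Multiplying
by `(-1)^|γ|` and using `θ_jd = θ_dj` turns it into the recurrence for `H_γ`.
-/

open Matrix Function

namespace MultiIndex

variable {ι : Type*} [DecidableEq ι]

theorem sub_single_add_single {γ : ι → ℕ} {k : ι} (hk : γ k ≠ 0) :
    γ - Pi.single k 1 + Pi.single k 1 = γ :=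
  tsub_add_cancel_of_le fun i => by
    rcases eq_or_ne i k with rfl | hi
    · simpa [Nat.one_le_iff_ne_zero] using hk
    · simp [hi]

theorem induction [Finite ι] {P : (ι → ℕ) → Prop} (zero : P 0)
    (add_single : ∀ γ k, P γ → P (γ + Pi.single k 1)) (γ : ι → ℕ) : P γ := by
  induction γ using WellFoundedLT.induction with
  | _ γ ih =>
    by_cases hγ : γ = 0
    · exact hγ ▸ zero
    obtain ⟨k, hk⟩ : ∃ k, γ k ≠ 0 := by simpa [funext_iff] using hγ
    rw [← sub_single_add_single hk]
    refine add_single _ k (ih _ (lt_of_le_of_ne tsub_le_self fun h => ?_))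
    have := congrFun h k
    simp only [Pi.sub_apply, Pi.single_eq_same] at this
    omega

theorem sum_add_single [Fintype ι] (γ : ι → ℕ) (k : ι) :
    ∑ i, (γ + Pi.single k 1 : ι → ℕ) i = ∑ i, γ i + 1 := by
  simp [Finset.sum_add_distrib]

theorem natCast_mul_apply_add_single_sub_single {R : Type*} [Semiring R]
    (F : (ι → ℕ) → R) (β : ι → ℕ) (k d : ι) :
    ((β + Pi.single k 1 : ι → ℕ) d : R) * F (β + Pi.single k 1 - Pi.single d 1) =
      (Pi.single k (1 : R) : ι → R) d * F β + β d * F (β - Pi.single d 1 + Pi.single k 1) := by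
  rcases eq_or_ne k d with rfl | hkd
  · rcases eq_or_ne (β k) 0 with hβ | hβ
    · simp [hβ]
    · simp [sub_single_add_single hβ, add_mul, add_comm]
  · have hsub : β + Pi.single k 1 - Pi.single d 1 = β - Pi.single d 1 + Pi.single k 1 := by
      ext i
      rcases eq_or_ne i d with rfl | hid
      · simp [hkd.symm]
      · rcases eq_or_ne i k with rfl | hik <;> simp [*]
    simp [hsub, hkd.symm]

theorem natCast_mul_neg_one_pow_sum_sub_single [Fintype ι] {R : Type*} [CommRing R]
    (γ : ι → ℕ) (d : ι) :
    (γ d : R) * (-1) ^ ∑ i, (γ - Pi.single d 1 : ι → ℕ) i = -((γ d : R) * (-1) ^ ∑ i, γ i) := by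
  rcases eq_or_ne (γ d) 0 with hγ | hγ
  · simp [hγ]
  · conv_rhs => rw [← sub_single_add_single hγ, sum_add_single, pow_succ]
    rw [sub_single_add_single hγ]
    ring

end MultiIndex

section PartialDerivs

open scoped ContDiff

variable {ι : Type*} [Fintype ι] [DecidableEq ι]

theorem DifferentiableAt.hasDerivAt_update {f : (ι → ℝ) → ℝ} {ξ : ι → ℝ}
    (hf : DifferentiableAt ℝ f ξ) (k : ι) :
    HasDerivAt (fun s => f (update ξ k s)) (fderiv ℝ f ξ (Pi.single k 1)) (ξ k) :=
  hf.hasFDerivAt.comp_hasDerivAt_of_eq (ξ k) (_root_.hasDerivAt_update ξ k (ξ k)) (by simp)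

structure HasPartialDerivs (f : (ι → ℝ) → ℝ) (Df : (ι → ℕ) → (ι → ℝ) → ℝ) : Prop where
  zero : Df 0 = f
  add_single : ∀ γ k, Df (γ + Pi.single k 1) = fun ξ => deriv (fun s => Df γ (update ξ k s)) (ξ k)

namespace HasPartialDerivs

variable {f : (ι → ℝ) → ℝ} {Df : (ι → ℕ) → (ι → ℝ) → ℝ}

theorem contDiff (hDf : HasPartialDerivs f Df) (hf : ContDiff ℝ ∞ f) (γ : ι → ℕ) :
    ContDiff ℝ ∞ (Df γ) := by
  induction γ using MultiIndex.induction with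
  | zero => rwa [hDf.zero]
  | add_single γ k ih =>
    have : Df (γ + Pi.single k 1) = fun ξ => fderiv ℝ (Df γ) ξ (Pi.single k 1) := by
      rw [hDf.add_single]
      ext ξ
      exact ((ih.differentiable (by simp) ξ).hasDerivAt_update k).deriv
    rw [this]
    exact (ih.fderiv_right le_rfl).clm_apply contDiff_const

theorem hasDerivAt_update (hDf : HasPartialDerivs f Df) (hf : ContDiff ℝ ∞ f) (γ : ι → ℕ)
    (ξ : ι → ℝ) (k : ι) :
    HasDerivAt (fun s => Df γ (update ξ k s)) (Df (γ + Pi.single k 1) ξ) (ξ k) := by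
  have h := ((hDf.contDiff hf γ).differentiable (by simp) ξ).hasDerivAt_update k
  rw [hDf.add_single]
  beta_reduce
  rwa [h.deriv]

theorem recurrence (hDf : HasPartialDerivs f Df) (hf : ContDiff ℝ ∞ f) {Θ : Matrix ι ι ℝ}
    {u : ι → ℝ} (hgrad : ∀ d ξ, ∑ j, Θ d j * Df (Pi.single j 1) ξ = (u d - ξ d) * f ξ)
    (γ : ι → ℕ) (d : ι) (ξ : ι → ℝ) :
    ξ d * Df γ ξ + γ d * Df (γ - Pi.single d 1) ξ =
      u d * Df γ ξ - ∑ j, Θ d j * Df (γ + Pi.single j 1) ξ := by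
  induction γ using MultiIndex.induction generalizing d ξ with
  | zero =>
    simp only [hDf.zero, zero_add, hgrad, Pi.zero_apply, Nat.cast_zero]
    ring
  | add_single β k ih =>
    -- differentiate the identity for `β` along the `k`-th coordinate
    have hcoord := hasDerivAt_pi.1 (_root_.hasDerivAt_update ξ k (ξ k)) d
    have hL := (hcoord.fun_mul (hDf.hasDerivAt_update hf β ξ k)).fun_add
      ((hDf.hasDerivAt_update hf (β - Pi.single d 1) ξ k).const_mul (β d : ℝ))
    have hR := ((hDf.hasDerivAt_update hf β ξ k).const_mul (u d)).fun_sub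
      (HasDerivAt.fun_sum fun j (_ : j ∈ Finset.univ) =>
        (hDf.hasDerivAt_update hf (β + Pi.single j 1) ξ k).const_mul (Θ d j))
    simp only [ih, update_eq_self] at hL
    have h := hL.unique hR
    rw [MultiIndex.natCast_mul_apply_add_single_sub_single (Df · ξ)]
    simp only [add_right_comm _ (Pi.single _ 1) (Pi.single k 1)] at h ⊢
    linarith

end HasPartialDerivs

end PartialDerivs

section Gaussian

open scoped ContDiff

variable {ι : Type*} [Fintype ι]

theorem HasDerivAt.dotProduct {𝕜 : Type*} [NontriviallyNormedField 𝕜] {v w : 𝕜 → ι → 𝕜}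
    {v' w' : ι → 𝕜} {t : 𝕜} (hv : HasDerivAt v v' t) (hw : HasDerivAt w w' t) :
    HasDerivAt (fun s => v s ⬝ᵥ w s) (v' ⬝ᵥ w t + v t ⬝ᵥ w') t := by
  simp only [_root_.dotProduct, ← Finset.sum_add_distrib]
  exact HasDerivAt.fun_sum fun i _ => (hasDerivAt_pi.1 hv i).mul (hasDerivAt_pi.1 hw i)

theorem HasDerivAt.mulVec {𝕜 κ : Type*} [NontriviallyNormedField 𝕜] [Fintype κ] {v : 𝕜 → ι → 𝕜}
    {v' : ι → 𝕜} {t : 𝕜} (A : Matrix κ ι 𝕜) (hv : HasDerivAt v v' t) :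
    HasDerivAt (fun s => A *ᵥ v s) (A *ᵥ v') t :=
  hasDerivAt_pi.2 fun i => by
    have := (hasDerivAt_const t (A i)).dotProduct hv
    rw [zero_dotProduct, zero_add] at this
    exact this

noncomputable def gaussianWeight (c : ℝ) (u : ι → ℝ) (A : Matrix ι ι ℝ) (ξ : ι → ℝ) : ℝ :=
  c * Real.exp (-((ξ - u) ⬝ᵥ (A *ᵥ (ξ - u))) / 2)

theorem contDiff_gaussianWeight (c : ℝ) (u : ι → ℝ) (A : Matrix ι ι ℝ) :
    ContDiff ℝ ∞ (gaussianWeight c u A) := by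
  unfold gaussianWeight
  simp only [dotProduct, mulVec, Pi.sub_apply]
  fun_prop

theorem hasDerivAt_gaussianWeight_update [DecidableEq ι] {A : Matrix ι ι ℝ} (hA : A.IsSymm)
    (c : ℝ) (u ξ : ι → ℝ) (k : ι) :
    HasDerivAt (fun s => gaussianWeight c u A (update ξ k s))
      (-(A *ᵥ (ξ - u)) k * gaussianWeight c u A ξ) (ξ k) := by
  have hv := (_root_.hasDerivAt_update ξ k (ξ k)).sub_const u
  have hq := hv.dotProduct (hv.mulVec A)
  rw [update_eq_self, single_dotProduct, dotProduct_mulVec, dotProduct_single, ← mulVec_transpose,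
    hA.eq] at hq
  refine (((hq.neg.div_const 2).exp).const_mul c).congr_deriv ?_
  simp only [gaussianWeight, Pi.neg_apply, update_eq_self]
  ring

theorem HasPartialDerivs.sum_mul_single_gaussianWeight [DecidableEq ι] {Θ : Matrix ι ι ℝ}
    (hΘs : Θ.IsSymm) (hΘ : IsUnit Θ.det) {c : ℝ} {u : ι → ℝ} {Df : (ι → ℕ) → (ι → ℝ) → ℝ}
    (hDf : HasPartialDerivs (gaussianWeight c u Θ⁻¹) Df) (d : ι) (ξ : ι → ℝ) :
    ∑ j, Θ d j * Df (Pi.single j 1) ξ = (u d - ξ d) * gaussianWeight c u Θ⁻¹ ξ := by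
  have hgrad (j : ι) : Df (Pi.single j 1) ξ = -(Θ⁻¹ *ᵥ (ξ - u)) j * gaussianWeight c u Θ⁻¹ ξ := by
    rw [← zero_add (Pi.single j 1), hDf.add_single, hDf.zero]
    exact (hasDerivAt_gaussianWeight_update hΘs.inv c u ξ j).deriv
  simp only [hgrad, neg_mul, mul_neg, Finset.sum_neg_distrib, ← mul_assoc, ← Finset.sum_mul]
  have : ∑ j, Θ d j * (Θ⁻¹ *ᵥ (ξ - u)) j = ξ d - u d := by
    change (Θ *ᵥ (Θ⁻¹ *ᵥ (ξ - u))) d = _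
    rw [mulVec_mulVec, mul_nonsing_inv _ hΘ, one_mulVec]
    rfl
  rw [this]
  ring

end Gaussian

theorem stmt_18_general (D : ℕ) (ρ : ℝ)
    (u : Fin D → ℝ) (Θ : Matrix (Fin D) (Fin D) ℝ)
    (hΘs : Θ.IsSymm) (hΘpd : Θ.PosDef)
    (ω : (Fin D → ℝ) → ℝ)
    (hω : ∀ ξ, ω ξ = ρ * (Real.sqrt ((2 * Real.pi) ^ D * Θ.det))⁻¹ *
      Real.exp (-((ξ - u) ⬝ᵥ (Θ⁻¹ *ᵥ (ξ - u))) / 2))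
    (Dω : (Fin D → ℕ) → (Fin D → ℝ) → ℝ)
    (hD0 : Dω 0 = ω)
    (hDrec : ∀ (α : Fin D → ℕ) (d : Fin D), Dω (α + Pi.single d 1) =
      fun ξ => deriv (fun s => Dω α (Function.update ξ d s)) (ξ d))
    (H : (Fin D → ℕ) → (Fin D → ℝ) → ℝ)
    (hH : ∀ α, H α = fun ξ => (-1 : ℝ) ^ (∑ d, α d) * Dω α ξ)
    (α : Fin D → ℕ) (d : Fin D) (ξ : Fin D → ℝ) :
    ξ d * H α ξ = (∑ j, Θ j d * H (α + Pi.single j 1) ξ)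
      + u d * H α ξ + (α d : ℝ) * H (α - Pi.single d 1) ξ := by
  have hDω : HasPartialDerivs (gaussianWeight _ u Θ⁻¹) Dω := ⟨hD0.trans (funext hω), hDrec⟩
  have hrec := hDω.recurrence (contDiff_gaussianWeight _ u _)
    (hDω.sum_mul_single_gaussianWeight hΘs (isUnit_iff_ne_zero.2 hΘpd.det_pos.ne')) α d ξ
  have hsum : ∑ j, Θ j d * H (α + Pi.single j 1) ξ =
      -(((-1) ^ ∑ i, α i) * ∑ j, Θ d j * Dω (α + Pi.single j 1) ξ) := by
    simp only [hH, MultiIndex.sum_add_single, pow_succ, Finset.mul_sum, hΘs.apply,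
      ← Finset.sum_neg_distrib]
    exact Finset.sum_congr rfl fun j _ => by ring
  rw [hsum]
  simp only [hH, ← mul_assoc, MultiIndex.natCast_mul_neg_one_pow_sum_sub_single]
  linear_combination ((-1 : ℝ) ^ ∑ i, α i) * hrec

/-- The generalized Hermite functions `H_α^Θ = (-1)^{|α|} ∂^α ω^{[u,Θ]}` for a Gaussian
weight with symmetric positive definite covariance `Θ` satisfy
`ξ_d H_α^Θ = Σ_j θ_{jd} H_{α+e_j}^Θ + u_d H_α^Θ + α_d H_{α-e_d}^Θ`. -/
theorem stmt_18 (D : ℕ) (hD : 1 ≤ D) (ρ : ℝ) (hρ : 0 < ρ)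
    (u : Fin D → ℝ) (Θ : Matrix (Fin D) (Fin D) ℝ)
    (hΘs : Θ.IsSymm) (hΘpd : Θ.PosDef)
    (ω : (Fin D → ℝ) → ℝ)
    (hω : ∀ ξ, ω ξ = ρ * (Real.sqrt ((2 * Real.pi) ^ D * Θ.det))⁻¹ *
      Real.exp (-((ξ - u) ⬝ᵥ (Θ⁻¹ *ᵥ (ξ - u))) / 2))
    (Dω : (Fin D → ℕ) → (Fin D → ℝ) → ℝ)
    (hD0 : Dω 0 = ω)
    (hDrec : ∀ (α : Fin D → ℕ) (d : Fin D), Dω (α + Pi.single d 1) =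
      fun ξ => deriv (fun s => Dω α (Function.update ξ d s)) (ξ d))
    (H : (Fin D → ℕ) → (Fin D → ℝ) → ℝ)
    (hH : ∀ α, H α = fun ξ => (-1 : ℝ) ^ (∑ d, α d) * Dω α ξ)
    (α : Fin D → ℕ) (d : Fin D) (ξ : Fin D → ℝ) :
    ξ d * H α ξ = (∑ j, Θ j d * H (α + Pi.single j 1) ξ)
      + u d * H α ξ + (α d : ℝ) * H (α - Pi.single d 1) ξ :=
  stmt_18_general D ρ u Θ hΘs hΘpd ω hω Dω hD0 hDrec H hH α d ξ
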